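/- arXiv:1911.11617 — 2 statements merged into one kernel-verified Lean document; each statement's English description precedes it below -/
import Mathlib

section
/- If P is a dcpo satisfying property D (in particular, if P is a complete semilattice), then P equipped with the upper topology ν(P) is a strong d-space. -/
open Set

universe u

variable {α : Type u}

/-- The upper topology `ν(P)`: generated by the complements of principal ideals `↓x`
as a subbasis of open sets. -/
def upperTop (α : Type u) [Preorder α] : TopologicalSpace α :=
  TopologicalSpace.generateFrom {U : Set α | ∃ a : α, U = (Set.Iic a)ᶜ}

/-- A dcpo: every directed subset has a supremum. -/
def IsDcpo (α : Type u) [Preorder α] : Prop :=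
  ∀ D : Set α, D.Nonempty → DirectedOn (· ≤ ·) D → ∃ s : α, IsLUB D s

/-- Scott closed set: a lower set closed under suprema of directed subsets. -/
def ScottClosed [Preorder α] (A : Set α) : Prop :=
  IsLowerSet A ∧
    ∀ D : Set α, D ⊆ A → D.Nonempty → DirectedOn (· ≤ ·) D → ∀ s : α, IsLUB D s → s ∈ A

/-- `↓B`: the lower closure of a set `B`. -/
def lowOf [Preorder α] (B : Set α) : Set α := {x : α | ∃ b ∈ B, x ≤ b}

/-- `(P, ν(P))` is a strong d-space (stated via the order of `P`, which coincides with the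
specialization order of `ν(P)`). -/
def UpperTopStrongDSpace (α : Type u) [Preorder α] : Prop :=
  ∀ D : Set α, D.Nonempty → DirectedOn (· ≤ ·) D → ∀ x : α, ∀ U : Set α,
    (upperTop α).IsOpen U → (⋂ d ∈ D, Set.Ici d) ∩ Set.Ici x ⊆ U →
      ∃ d ∈ D, Set.Ici d ∩ Set.Ici x ⊆ U

/-- Property D: every nonempty family with a lower bound has an ideal (nonempty directed
lower set) as the intersection of the corresponding principal ideals. -/
def PropertyD (α : Type u) [Preorder α] : Prop :=
  ∀ S : Set α, S.Nonempty → (∃ b : α, ∀ x ∈ S, b ≤ x) →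
    (⋂ x ∈ S, Set.Iic x).Nonempty ∧ DirectedOn (· ≤ ·) (⋂ x ∈ S, Set.Iic x)

lemma scottClosed_union [Preorder α] {A B : Set α} (hA : ScottClosed A) (hB : ScottClosed B) :
    ScottClosed (A ∪ B) := by
  refine ⟨hA.1.union hB.1, ?_⟩
  intro D hDsub hne hdir s hs
  by_cases h : ∃ d0 ∈ D, ∀ e ∈ D, d0 ≤ e → e ∈ B
  · obtain ⟨d0, hd0, hall⟩ := h
    refine Or.inr (hB.2 (D ∩ Set.Ici d0) ?_ ⟨d0, hd0, le_refl d0⟩ ?_ s ⟨?_, ?_⟩)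
    · rintro e ⟨heD, hle⟩; exact hall e heD hle
    · rintro a ⟨haD, ha0⟩ b ⟨hbD, _⟩
      obtain ⟨c, hcD, hac, hbc⟩ := hdir a haD b hbD
      exact ⟨c, ⟨hcD, le_trans ha0 hac⟩, hac, hbc⟩
    · rintro e ⟨heD, _⟩; exact hs.1 heD
    · intro u hu
      refine hs.2 ?_
      intro e heD
      obtain ⟨c, hcD, hec, h0c⟩ := hdir e heD d0 hd0
      exact le_trans hec (hu ⟨hcD, h0c⟩)
  · push_neg at h
    have hcof : ∀ e ∈ D, ∃ c, c ∈ D ∧ e ≤ c ∧ c ∈ A := by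
      intro e heD
      obtain ⟨c, hcD, hec, hcB⟩ := h e heD
      exact ⟨c, hcD, hec, (hDsub hcD).resolve_right hcB⟩
    obtain ⟨e0, he0⟩ := hne
    obtain ⟨c0, hc0D, _, hc0A⟩ := hcof e0 he0
    refine Or.inl (hA.2 (D ∩ A) (fun _ h => h.2) ⟨c0, hc0D, hc0A⟩ ?_ s ⟨?_, ?_⟩)
    · rintro a ⟨haD, _⟩ b ⟨hbD, _⟩
      obtain ⟨c, hcD, hac, hbc⟩ := hdir a haD b hbD
      obtain ⟨c', hc'D, hcc', hc'A⟩ := hcof c hcD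
      exact ⟨c', ⟨hc'D, hc'A⟩, le_trans hac hcc', le_trans hbc hcc'⟩
    · rintro e ⟨heD, _⟩; exact hs.1 heD
    · intro u hu
      refine hs.2 ?_
      intro e heD
      obtain ⟨c, hcD, hec, hcA⟩ := hcof e heD
      exact le_trans hec (hu ⟨hcD, hcA⟩)

lemma scottClosed_of_upperTop_open [Preorder α] {U : Set α}
    (h : (upperTop α).IsOpen U) : ScottClosed Uᶜ := by
  induction h with
  | basic V hV =>
    obtain ⟨a, rfl⟩ := hV
    rw [compl_compl]
    refine ⟨fun u v hvu hu => le_trans hvu hu, ?_⟩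
    intro D hDsub hne hdir s hs
    obtain ⟨e, he⟩ := hne
    exact hs.2 fun d hd => hDsub hd
  | univ =>
    rw [compl_univ]
    exact ⟨fun _ _ _ h => h, fun D hDsub hne _ _ _ => absurd (hDsub hne.choose_spec) id⟩
  | inter V W _ _ ihV ihW =>
    rw [Set.compl_inter]
    exact scottClosed_union ihV ihW
  | sUnion S _ ih =>
    constructor
    · intro u v hvu hu
      rw [Set.compl_sUnion] at hu ⊢
      intro t ht
      obtain ⟨w, hwS, rfl⟩ := ht
      exact (ih w hwS).1 hvu (hu _ ⟨w, hwS, rfl⟩)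
    · intro D hDsub hne hdir s hs
      rw [Set.compl_sUnion]
      rintro t ⟨w, hwS, rfl⟩
      refine (ih w hwS).2 D ?_ hne hdir s hs
      intro d hd
      have := hDsub hd
      rw [Set.compl_sUnion] at this
      exact this _ ⟨w, hwS, rfl⟩

/-- a dcpo with property D equipped with the upper topology is a
strong d-space. -/
theorem stmt_18 (α : Type u) [PartialOrder α] (hdcpo : IsDcpo α) (hD : PropertyD α) :
    UpperTopStrongDSpace α := by
  intro D hne hdir x U hU hsub
  by_contra hcon
  push_neg at hcon
  have hz : ∀ d ∈ D, ∃ w, d ≤ w ∧ x ≤ w ∧ w ∉ U := by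
    intro d hd
    obtain ⟨y, hy, hyU⟩ := Set.not_subset.mp (hcon d hd)
    exact ⟨y, hy.1, hy.2, hyU⟩
  choose! z hdz hxz hzU using hz
  have hC : ScottClosed Uᶜ := scottClosed_of_upperTop_open hU
  -- the family S d and the ideals I d
  set S : α → Set α := fun d => z '' {e | e ∈ D ∧ d ≤ e} with hS
  set I : α → Set α := fun d => ⋂ y ∈ S d, Set.Iic y with hI
  have hmemS : ∀ d ∈ D, z d ∈ S d := fun d hd => ⟨d, ⟨hd, le_refl d⟩, rfl⟩
  have hIprop : ∀ d ∈ D, (I d).Nonempty ∧ DirectedOn (· ≤ ·) (I d) := by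
    intro d hd
    refine hD (S d) ⟨z d, hmemS d hd⟩ ⟨x, ?_⟩
    rintro y ⟨e, ⟨heD, _⟩, rfl⟩
    exact hxz e heD
  have hdI : ∀ d ∈ D, d ∈ I d := by
    intro d hd
    refine Set.mem_iInter₂.mpr ?_
    rintro y ⟨e, ⟨heD, hde⟩, rfl⟩
    exact le_trans hde (hdz e heD)
  have hxI : ∀ d ∈ D, x ∈ I d := by
    intro d hd
    refine Set.mem_iInter₂.mpr ?_
    rintro y ⟨e, ⟨heD, _⟩, rfl⟩
    exact hxz e heD
  have hIC : ∀ d ∈ D, I d ⊆ Uᶜ := by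
    intro d hd y hy
    have hyz : y ≤ z d := Set.mem_iInter₂.mp hy (z d) (hmemS d hd)
    exact hC.1 hyz (hzU d hd)
  have hmono : ∀ d1 ∈ D, ∀ d2 ∈ D, d1 ≤ d2 → I d1 ⊆ I d2 := by
    intro d1 _ d2 _ h12 y hy
    refine Set.mem_iInter₂.mpr ?_
    rintro w ⟨e, ⟨heD, hde⟩, rfl⟩
    exact Set.mem_iInter₂.mp hy (z e) ⟨e, ⟨heD, le_trans h12 hde⟩, rfl⟩
  set J : Set α := ⋃ d ∈ D, I d with hJ
  obtain ⟨d0, hd0⟩ := hne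
  have hJne : J.Nonempty := ⟨d0, Set.mem_iUnion₂.mpr ⟨d0, hd0, hdI d0 hd0⟩⟩
  have hJdir : DirectedOn (· ≤ ·) J := by
    intro a ha b hb
    obtain ⟨d1, hd1, haI⟩ := Set.mem_iUnion₂.mp ha
    obtain ⟨d2, hd2, hbI⟩ := Set.mem_iUnion₂.mp hb
    obtain ⟨d, hd, h1d, h2d⟩ := hdir d1 hd1 d2 hd2
    obtain ⟨c, hcI, hac, hbc⟩ :=
      (hIprop d hd).2 a (hmono d1 hd1 d hd h1d haI) b (hmono d2 hd2 d hd h2d hbI)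
    exact ⟨c, Set.mem_iUnion₂.mpr ⟨d, hd, hcI⟩, hac, hbc⟩
  have hJC : J ⊆ Uᶜ := by
    intro y hy
    obtain ⟨d, hd, hyI⟩ := Set.mem_iUnion₂.mp hy
    exact hIC d hd hyI
  obtain ⟨m, hm⟩ := hdcpo J hJne hJdir
  have hmC : m ∈ Uᶜ := hC.2 J hJC hJne hJdir m hm
  have hmU : m ∈ U := by
    refine hsub ⟨Set.mem_iInter₂.mpr fun d hd => ?_, ?_⟩
    · exact hm.1 (Set.mem_iUnion₂.mpr ⟨d, hd, hdI d hd⟩)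
    · exact hm.1 (Set.mem_iUnion₂.mpr ⟨d0, hd0, hxI d0 hd0⟩)
  exact hmC hmU
end

section
/- For a T0 space X, the following are equivalent: (1) X is sober; (2) for every irreducible closed set A and every nonempty upper set K of X: the family Ψ_up(A) = {nonempty upper sets meeting A} is a filter in the poset of nonempty upper sets under reverse inclusion (in particular, for any two nonempty upper sets K1, K2 meeting A there is a nonempty upper set K3 ⊆ K1 ∩ K2 meeting A), A has a maximal element, and ↓(A ∩ K) is closed; (3) for every irreducible closed set A and every nonempty compact saturated set K: the family Ψ_K(A) = {K' ∈ K(X) : K' ∩ A ≠ ∅} is a filter in the poset K(X) under reverse inclusion (in particular, for any K1, K2 ∈ K(X) meeting A there is K3 ∈ K(X) with K3 ⊆ K1 ∩ K2 meeting A), A has a maximal element, and ↓(A ∩ K) is closed. -/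
open Set

universe u

variable {α : Type u}

/-- The specialization order used in the paper: `x ≤ y` iff `x ∈ closure {y}`. -/
def specLE [TopologicalSpace α] (x y : α) : Prop := x ∈ closure ({y} : Set α)

/-- `↑x = {y | x ≤ y}` in the specialization order. -/
def upOf [TopologicalSpace α] (x : α) : Set α := {y | specLE x y}

/-- `↑F = {y | ∃ a ∈ F, a ≤ y}` in the specialization order. -/
def upSetOf [TopologicalSpace α] (F : Set α) : Set α := {y | ∃ a ∈ F, specLE a y}

/-- `↓B = {x | ∃ b ∈ B, x ≤ b}` in the specialization order. -/
def downOf [TopologicalSpace α] (B : Set α) : Set α := {x | ∃ b ∈ B, specLE x b}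

/-- A set directed with respect to the specialization order: nonempty, and any two
elements have an upper bound in it. -/
def SDirected [TopologicalSpace α] (D : Set α) : Prop :=
  D.Nonempty ∧ ∀ a ∈ D, ∀ b ∈ D, ∃ c ∈ D, specLE a c ∧ specLE b c

/-- `s` is a supremum (least upper bound) of `D` in the specialization order. -/
def SIsSup [TopologicalSpace α] (D : Set α) (s : α) : Prop :=
  (∀ d ∈ D, specLE d s) ∧ ∀ t : α, (∀ d ∈ D, specLE d t) → specLE s t

/-- Upper set (= saturated set) in the specialization order. -/
def SUpper [TopologicalSpace α] (A : Set α) : Prop :=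
  ∀ ⦃x y : α⦄, x ∈ A → specLE x y → y ∈ A

/-- Scott open set with respect to the specialization order. -/
def SScottOpen [TopologicalSpace α] (U : Set α) : Prop :=
  SUpper U ∧ ∀ D : Set α, SDirected D → ∀ s : α, SIsSup D s → s ∈ U → (D ∩ U).Nonempty

/-- A d-space: a dcpo under the specialization order, all open sets Scott open. -/
def IsDSpace (α : Type u) [TopologicalSpace α] : Prop :=
  (∀ D : Set α, SDirected D → ∃ s : α, SIsSup D s) ∧
    ∀ U : Set α, IsOpen U → SScottOpen U

/-- Member of `K(X)`: nonempty, compact and saturated. -/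
def IsKSet [TopologicalSpace α] (K : Set α) : Prop :=
  K.Nonempty ∧ IsCompact K ∧ SUpper K

/-- A filtered family of sets: nonempty, and any two members contain a common member. -/
def FilteredFam (𝒦 : Set (Set α)) : Prop :=
  𝒦.Nonempty ∧ ∀ K1 ∈ 𝒦, ∀ K2 ∈ 𝒦, ∃ K3 ∈ 𝒦, K3 ⊆ K1 ∩ K2

/-- Well-filtered space: for every filtered family of nonempty compact saturated sets whose
intersection is contained in an open `U`, some member is contained in `U`. -/
def IsWellFiltered (α : Type u) [TopologicalSpace α] : Prop :=
  ∀ 𝒦 : Set (Set α), (∀ K ∈ 𝒦, IsKSet K) → FilteredFam 𝒦 →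
    ∀ U : Set α, IsOpen U → ⋂₀ 𝒦 ⊆ U → ∃ K ∈ 𝒦, K ⊆ U

/-- Rudin set: a nonempty set `A` such that for some filtered family `𝒦 ⊆ K(X)`,
`closure A` is a minimal closed set meeting every member of `𝒦`. -/
def IsRudin [TopologicalSpace α] (A : Set α) : Prop :=
  A.Nonempty ∧ ∃ 𝒦 : Set (Set α), (∀ K ∈ 𝒦, IsKSet K) ∧ FilteredFam 𝒦 ∧
    (∀ K ∈ 𝒦, (closure A ∩ K).Nonempty) ∧
    ∀ B : Set α, IsClosed B → B ⊆ closure A → (∀ K ∈ 𝒦, (B ∩ K).Nonempty) → B = closure A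

/-- Well-filtered determined set: every continuous map into a well-filtered T0 space sends it
to a set whose closure is the closure of a unique point. -/
def IsWFD [TopologicalSpace α] (A : Set α) : Prop :=
  ∀ (Y : Type u) [TopologicalSpace Y] [T0Space Y], IsWellFiltered Y →
    ∀ f : α → Y, Continuous f → ∃! y : Y, closure (f '' A) = closure ({y} : Set Y)

/-- Irreducible set. -/
def IsIrred [TopologicalSpace α] (A : Set α) : Prop :=
  A.Nonempty ∧ ∀ F1 F2 : Set α, IsClosed F1 → IsClosed F2 → A ⊆ F1 ∪ F2 → A ⊆ F1 ∨ A ⊆ F2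

/-- Sober space: every irreducible closed set is the closure of a unique point. -/
def IsSober (α : Type u) [TopologicalSpace α] : Prop :=
  ∀ A : Set α, IsClosed A → IsIrred A → ∃! x : α, A = closure ({x} : Set α)

/-- `A` has a maximal element with respect to the specialization order. -/
def HasMaxElem [TopologicalSpace α] (A : Set α) : Prop :=
  ∃ m ∈ A, ∀ a ∈ A, specLE m a → a = m

/-- Strong d-space. -/
def IsStrongDSpace (α : Type u) [TopologicalSpace α] : Prop :=
  ∀ D : Set α, SDirected D → ∀ x : α, ∀ U : Set α, IsOpen U →
    (⋂ d ∈ D, upOf d) ∩ upOf x ⊆ U → ∃ d ∈ D, upOf d ∩ upOf x ⊆ U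

/-- `Ψ_up(A)`: the nonempty upper sets meeting `A`. -/
def PsiUp [TopologicalSpace α] (A : Set α) : Set (Set α) :=
  {K : Set α | K.Nonempty ∧ SUpper K ∧ (K ∩ A).Nonempty}

/-- `Ψ_K(A)`: the nonempty compact saturated sets meeting `A`. -/
def PsiK [TopologicalSpace α] (A : Set α) : Set (Set α) :=
  {K : Set α | IsKSet K ∧ (K ∩ A).Nonempty}

/-- `Ψ` is a filter in the ambient family `amb` under reverse inclusion: nonempty, closed
under passing to supersets within `amb`, and any two members contain a common member. -/
def IsFilterIn (Ψ amb : Set (Set α)) : Prop :=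
  Ψ.Nonempty ∧ (∀ K ∈ Ψ, ∀ K' ∈ amb, K ⊆ K' → K' ∈ Ψ) ∧
    ∀ K1 ∈ Ψ, ∀ K2 ∈ Ψ, ∃ K3 ∈ Ψ, K3 ⊆ K1 ∩ K2

/-!
In a sober space an irreducible closed set is `closure {x}`, whose greatest element is `x`; an upper
set meets it iff it contains `x`, which gives the filter, the maximal element and `↓(A ∩ K) ∈ {A, ∅}`.
Conversely, if `m` is maximal in `A` and `↑a`, `↑m` have a common lower bound meeting `A`, that
bound meets `A` only at points above `m`, i.e. at `m`; so every `a ∈ A` lies below `m` and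
`A = closure {m}`. Uniqueness of `m` is the T0 axiom.
-/

variable [TopologicalSpace α]

lemma specLE_iff_specializes {x y : α} : specLE x y ↔ y ⤳ x :=
  specializes_iff_mem_closure.symm

lemma mem_upOf_self (x : α) : x ∈ upOf x := subset_closure rfl

lemma specLE_trans {x y z : α} (hxy : specLE x y) (hyz : specLE y z) : specLE x z :=
  specLE_iff_specializes.2
    ((specLE_iff_specializes.1 hyz).trans (specLE_iff_specializes.1 hxy))

lemma sUpper_upOf (x : α) : SUpper (upOf x) := fun _ _ hy hyz => specLE_trans hy hyz

lemma upOf_eq_nhdsKer (x : α) : upOf x = nhdsKer {x} := by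
  ext y
  rw [mem_nhdsKer_singleton, ← specLE_iff_specializes]
  rfl

lemma isKSet_upOf (x : α) : IsKSet (upOf x) :=
  ⟨⟨x, mem_upOf_self x⟩, upOf_eq_nhdsKer x ▸ isCompact_singleton.nhdsKer, sUpper_upOf x⟩

lemma existsUnique_eq_closure_singleton [T0Space α] {A : Set α} {x : α}
    (hx : A = closure {x}) : ∃! y : α, A = closure {y} :=
  ⟨x, hx, fun _ hy => (inseparable_iff_closure_eq.2 (hy.symm.trans hx)).eq⟩

lemma SUpper.mem_of_inter_closure_singleton {K : Set α} (hK : SUpper K) {x : α}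
    (h : (K ∩ closure {x}).Nonempty) : x ∈ K :=
  let ⟨_, haK, hax⟩ := h
  hK haK hax

section ClosureSingleton

variable {x : α}

lemma isFilterIn_of_closure_singleton {Ψ amb : Set (Set α)}
    (hΨ : ∀ K, K ∈ Ψ ↔ K ∈ amb ∧ (K ∩ closure {x}).Nonempty)
    (hamb : ∀ K ∈ amb, SUpper K) (hx : upOf x ∈ amb) : IsFilterIn Ψ amb := by
  have upOf_mem : upOf x ∈ Ψ := (hΨ _).2 ⟨hx, x, mem_upOf_self x, subset_closure rfl⟩
  have upOf_subset : ∀ K ∈ Ψ, upOf x ⊆ K := fun K hK => by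
    obtain ⟨hKamb, hKx⟩ := (hΨ K).1 hK
    exact fun _ hy => hamb K hKamb ((hamb K hKamb).mem_of_inter_closure_singleton hKx) hy
  refine ⟨⟨_, upOf_mem⟩, fun K hK K' hK' hKK' => ?_, fun K1 hK1 K2 hK2 =>
    ⟨upOf x, upOf_mem, subset_inter (upOf_subset K1 hK1) (upOf_subset K2 hK2)⟩⟩
  exact (hΨ K').2 ⟨hK', ((hΨ K).1 hK).2.mono (inter_subset_inter_left _ hKK')⟩

lemma hasMaxElem_closure_singleton [T0Space α] (x : α) : HasMaxElem (closure {x}) :=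
  ⟨x, subset_closure rfl, fun _ hax hxa =>
    ((specLE_iff_specializes.1 hxa).antisymm (specLE_iff_specializes.1 hax)).eq⟩

lemma isClosed_downOf_closure_singleton_inter {K : Set α} (hK : SUpper K) :
    IsClosed (downOf (closure {x} ∩ K)) := by
  by_cases hxK : x ∈ K
  · have hdown : downOf (closure {x} ∩ K) = closure {x} := by
      refine Subset.antisymm ?_ fun a hax => ⟨x, ⟨subset_closure rfl, hxK⟩, hax⟩
      rintro a ⟨b, ⟨hbx, -⟩, hab⟩
      exact specLE_trans hab hbx
    rw [hdown]; exact isClosed_closure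
  · have hdown : downOf (closure {x} ∩ K) = ∅ :=
      eq_empty_of_forall_notMem fun _ ⟨b, hb, _⟩ =>
        hxK (hK.mem_of_inter_closure_singleton ⟨b, hb.2, hb.1⟩)
    rw [hdown]; exact isClosed_empty

end ClosureSingleton

lemma eq_closure_singleton_of_isFilterIn {Ψ amb : Set (Set α)} {A : Set α} {m : α}
    (hΨ : ∀ K, K ∈ Ψ ↔ K ∈ amb ∧ (K ∩ A).Nonempty) (hup : ∀ x, upOf x ∈ amb)
    (hfilt : IsFilterIn Ψ amb) (hA : IsClosed A) (hm : m ∈ A)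
    (hmax : ∀ a ∈ A, specLE m a → a = m) : A = closure {m} := by
  refine Subset.antisymm (fun a ha => ?_) (closure_minimal (singleton_subset_iff.2 hm) hA)
  have upOf_mem : ∀ b ∈ A, upOf b ∈ Ψ := fun b hb =>
    (hΨ _).2 ⟨hup b, b, mem_upOf_self b, hb⟩
  obtain ⟨K, hK, hKsub⟩ := hfilt.2.2 _ (upOf_mem a ha) _ (upOf_mem m hm)
  obtain ⟨c, hcK, hcA⟩ := ((hΨ K).1 hK).2
  obtain ⟨hac, hmc⟩ := hKsub hcK
  exact hmax c hcA hmc ▸ hac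

/-- characterizations of sober spaces. -/
theorem stmt_19 (α : Type u) [TopologicalSpace α] [T0Space α] :
    List.TFAE
      [ IsSober α,
        ∀ A : Set α, IsClosed A → IsIrred A →
          IsFilterIn (PsiUp A) {K : Set α | K.Nonempty ∧ SUpper K} ∧ HasMaxElem A ∧
            ∀ K : Set α, K.Nonempty → SUpper K → IsClosed (downOf (A ∩ K)),
        ∀ A : Set α, IsClosed A → IsIrred A →
          IsFilterIn (PsiK A) {K : Set α | IsKSet K} ∧ HasMaxElem A ∧
            ∀ K : Set α, IsKSet K → IsClosed (downOf (A ∩ K)) ] := by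
  tfae_have 1 → 2 := fun hsober A hA hirr => by
    obtain ⟨x, rfl, -⟩ := hsober A hA hirr
    exact ⟨isFilterIn_of_closure_singleton (fun _ => and_assoc.symm) (fun _ hK => hK.2)
        ⟨⟨x, mem_upOf_self x⟩, sUpper_upOf x⟩,
      hasMaxElem_closure_singleton x, fun _ _ hK => isClosed_downOf_closure_singleton_inter hK⟩
  tfae_have 1 → 3 := fun hsober A hA hirr => by
    obtain ⟨x, rfl, -⟩ := hsober A hA hirr
    exact ⟨isFilterIn_of_closure_singleton (fun _ => Iff.rfl) (fun _ hK => hK.2.2)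
        (isKSet_upOf x),
      hasMaxElem_closure_singleton x, fun _ hK => isClosed_downOf_closure_singleton_inter hK.2.2⟩
  tfae_have 2 → 1 := fun h A hA hirr => by
    obtain ⟨hfilt, ⟨m, hm, hmax⟩, -⟩ := h A hA hirr
    exact existsUnique_eq_closure_singleton <| eq_closure_singleton_of_isFilterIn
      (fun _ => and_assoc.symm) (fun x => ⟨⟨x, mem_upOf_self x⟩, sUpper_upOf x⟩) hfilt hA hm hmax
  tfae_have 3 → 1 := fun h A hA hirr => by
    obtain ⟨hfilt, ⟨m, hm, hmax⟩, -⟩ := h A hA hirr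
    exact existsUnique_eq_closure_singleton <| eq_closure_singleton_of_isFilterIn
      (fun _ => Iff.rfl) isKSet_upOf hfilt hA hm hmax
  tfae_finish
end
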